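/- Let d ≥ 2 and let T_d be the d-dimensional folded Baker's map on Q_d. For any k, k', l ∈ ℕ with l ≤ k', j_d ∈ ℤ ∩ [0, 2^k), and j_1, …, j_{d-1} ∈ ℤ ∩ [0, 2^{k'}), the set T_d^l(H^{j_d}_k ∩ V^{j_1,…,j_{d-1}}_{k'}) is a single dyadic box from G^d_{k+(d-1)l, k'-l}; that is, there exist a ∈ ℤ ∩ [0, 2^{k+(d-1)l}) and b_1, …, b_{d-1} ∈ ℤ ∩ [0, 2^{k'-l}) such that T_d^l(H^{j_d}_k ∩ V^{j_1,…,j_{d-1}}_{k'}) = H^a_{k+(d-1)l} ∩ V^{b_1,…,b_{d-1}}_{k'-l}. -/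

import Mathlib

open MeasureTheory Set Filter

noncomputable section

/-- The 2D folded Baker's map on `(0,1)²` (extended to all of `ℝ²` by the same formulas). -/
def T2 : ℝ × ℝ → ℝ × ℝ := fun p =>
  if p.1 < 1/2 then (1 - 2 * p.1, (1 - p.2) / 2)
  else if p.1 = 1/2 then (p.2, 1/2)
  else (2 * p.1 - 1, (1 + p.2) / 2)

/-- The map applying `T2` to the pair of coordinates `(x i, x j)` of `x ∈ ℝ^d`, leaving all
other coordinates unchanged. -/
def Tapply (d : ℕ) (i j : Fin d) (x : EuclideanSpace ℝ (Fin d)) :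
    EuclideanSpace ℝ (Fin d) := WithLp.toLp 2 fun l =>
  if l = i then (T2 (x i, x j)).1 else if l = j then (T2 (x i, x j)).2 else x l

/-- The `d`-dimensional folded Baker's map `T_d = T_{d,d-1} ∘ ⋯ ∘ T_{d,1}`, where `T_{d,i}`
applies `T2` to the coordinates `(x_i, x_d)`. -/
def Td (d : ℕ) : EuclideanSpace ℝ (Fin d) → EuclideanSpace ℝ (Fin d) := fun x =>
  (List.finRange d).foldl
    (fun y (i : Fin d) => if hi : i.val < d - 1 then Tapply d i ⟨d - 1, by omega⟩ y else y) x

/-- The open unit cube `Q_d = (0,1)^d`. -/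
def Qd (d : ℕ) : Set (EuclideanSpace ℝ (Fin d)) := {x | ∀ i, x i ∈ Ioo (0:ℝ) 1}

/-- `Q_d` minus all points with a dyadic rational coordinate. -/
def Qd' (d : ℕ) : Set (EuclideanSpace ℝ (Fin d)) :=
  Qd d \ {x | ∃ i, ∃ k : ℕ, ∃ m : ℤ, 2 ^ k * x i = (m : ℝ)}

/-- The last coordinate `x_d` of `x ∈ ℝ^d`. -/
def lastCoord (d : ℕ) (x : EuclideanSpace ℝ (Fin d)) : ℝ :=
  if h : 0 < d then x ⟨d - 1, by omega⟩ else 0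

/-- The horizontal dyadic slab `H^j_k` of width `2^{-k}`. -/
def Hslab (d : ℕ) (j k : ℕ) : Set (EuclideanSpace ℝ (Fin d)) :=
  {x | lastCoord d x ∈ Ioo ((j : ℝ) / 2 ^ k) (((j : ℝ) + 1) / 2 ^ k)} ∩ Qd' d

/-- The vertical dyadic strip `V^{j_1,…,j_{d-1}}_{k'}` of width `2^{-k'}` (indexed by a
function `j : Fin d → ℕ` whose values at the first `d-1` coordinates are the indices). -/
def VstripD (d : ℕ) (j : Fin d → ℕ) (k' : ℕ) : Set (EuclideanSpace ℝ (Fin d)) :=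
  {x | ∀ i : Fin d, i.val < d - 1 →
    x i ∈ Ioo ((j i : ℝ) / 2 ^ k') (((j i : ℝ) + 1) / 2 ^ k')} ∩ Qd' d

/-!
On the left half `x < 1/2` the folded Baker's map is the product of the affine bijections
`x ↦ 1 - 2x` and `y ↦ (1 - y)/2`, on the right half of `x ↦ 2x - 1` and `y ↦ (1 + y)/2`; all four
preserve the dyadic rationals. A dyadic interval of depth `s + 1` lies in one half, so `T` maps the
product of dyadic intervals of depths `s + 1` and `t` (dyadic points removed) onto a product of
dyadic intervals of depths `s` and `t + 1`. Hence each `T_{d,i}` maps a dyadic box onto a dyadic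
box, moving one level of depth from `x_i` to `x_d`; one application of `T_d` turns the depths
`(v + 1, …, v + 1, h)` into `(v, …, v, h + d - 1)`, and `l ≤ k'` iterations give the theorem.
-/

open Function

def dyadics : AddSubgroup ℝ where
  carrier := {t | ∃ k : ℕ, ∃ m : ℤ, 2 ^ k * t = m}
  zero_mem' := ⟨0, 0, by simp⟩
  add_mem' := by
    rintro a b ⟨k, m, ha⟩ ⟨k', m', hb⟩
    refine ⟨k + k', 2 ^ k' * m + 2 ^ k * m', ?_⟩
    push_cast
    linear_combination 2 ^ k' * ha + 2 ^ k * hb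
  neg_mem' := by
    rintro a ⟨k, m, ha⟩
    exact ⟨k, -m, by push_cast; linear_combination -ha⟩

lemma mem_dyadics {t : ℝ} : t ∈ dyadics ↔ ∃ k : ℕ, ∃ m : ℤ, 2 ^ k * t = m := Iff.rfl

lemma one_mem_dyadics : (1 : ℝ) ∈ dyadics := ⟨0, 1, by simp⟩

lemma div_two_mem_dyadics_iff {t : ℝ} : t / 2 ∈ dyadics ↔ t ∈ dyadics :=
  ⟨fun h => by simpa using add_mem h h,
    fun ⟨k, m, h⟩ => ⟨k + 1, m, by rw [pow_succ]; linear_combination h⟩⟩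

lemma one_sub_div_two_mem_dyadics_iff {t : ℝ} : (1 - t) / 2 ∈ dyadics ↔ t ∈ dyadics := by
  rw [div_two_mem_dyadics_iff, sub_eq_add_neg, add_mem_cancel_left one_mem_dyadics, neg_mem_iff]

lemma one_add_div_two_mem_dyadics_iff {t : ℝ} : (1 + t) / 2 ∈ dyadics ↔ t ∈ dyadics := by
  rw [div_two_mem_dyadics_iff, add_mem_cancel_left one_mem_dyadics]

def dyadicCell (j s : ℕ) : Set ℝ := Ioo ((j : ℝ) / 2 ^ s) ((j + 1) / 2 ^ s) \ dyadics

lemma mem_dyadicCell {j s : ℕ} {x : ℝ} :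
    x ∈ dyadicCell j s ↔ ((j : ℝ) < 2 ^ s * x ∧ 2 ^ s * x < j + 1) ∧ x ∉ dyadics := by
  rw [dyadicCell, Set.mem_sdiff, mem_Ioo, div_lt_iff₀' (by positivity),
    lt_div_iff₀' (by positivity), SetLike.mem_coe]

lemma dyadicCell_subset_Ioo {j s : ℕ} (h : j < 2 ^ s) : dyadicCell j s ⊆ Ioo 0 1 := by
  intro x hx
  have h' : (j : ℝ) + 1 ≤ 2 ^ s := by exact_mod_cast h
  obtain ⟨⟨h1, h2⟩, -⟩ := mem_dyadicCell.1 hx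
  constructor <;> nlinarith [pow_pos (two_pos (α := ℝ)) s, j.cast_nonneg (α := ℝ)]

lemma dyadicCell_succ_subset_Iio {j s : ℕ} (h : j < 2 ^ s) :
    dyadicCell j (s + 1) ⊆ Iio (1 / 2) := by
  intro x hx
  have h' : (j : ℝ) + 1 ≤ 2 ^ s := by exact_mod_cast h
  obtain ⟨⟨-, h2⟩, -⟩ := mem_dyadicCell.1 hx
  rw [pow_succ] at h2
  rw [mem_Iio]
  nlinarith [pow_pos (two_pos (α := ℝ)) s]

lemma dyadicCell_succ_subset_Ioi {j s : ℕ} (h : 2 ^ s ≤ j) :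
    dyadicCell j (s + 1) ⊆ Ioi (1 / 2) := by
  intro x hx
  have h' : (2 : ℝ) ^ s ≤ j := by exact_mod_cast h
  obtain ⟨⟨h1, -⟩, -⟩ := mem_dyadicCell.1 hx
  rw [pow_succ] at h1
  rw [mem_Ioi]
  nlinarith [pow_pos (two_pos (α := ℝ)) s]

@[simps]
def foldLeft : ℝ ≃ ℝ where
  toFun x := 1 - 2 * x
  invFun y := (1 - y) / 2
  left_inv x := by ring
  right_inv y := by ring

@[simps]
def foldRight : ℝ ≃ ℝ where
  toFun x := 2 * x - 1
  invFun y := (1 + y) / 2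
  left_inv x := by ring
  right_inv y := by ring

lemma foldLeft_image_dyadicCell {j b s : ℕ} (h : j + b + 1 = 2 ^ s) :
    foldLeft '' dyadicCell j (s + 1) = dyadicCell b s := by
  have h' : (j : ℝ) + b + 1 = 2 ^ s := by exact_mod_cast h
  ext y
  rw [mem_image_equiv, foldLeft_symm_apply, mem_dyadicCell, mem_dyadicCell,
    one_sub_div_two_mem_dyadics_iff,
    show (2 : ℝ) ^ (s + 1) * ((1 - y) / 2) = 2 ^ s - 2 ^ s * y by ring]
  exact and_congr_left' ⟨fun ⟨h1, h2⟩ => ⟨by linarith, by linarith⟩,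
    fun ⟨h1, h2⟩ => ⟨by linarith, by linarith⟩⟩

lemma foldRight_image_dyadicCell {b s : ℕ} :
    foldRight '' dyadicCell (b + 2 ^ s) (s + 1) = dyadicCell b s := by
  ext y
  rw [mem_image_equiv, foldRight_symm_apply, mem_dyadicCell, mem_dyadicCell,
    one_add_div_two_mem_dyadics_iff,
    show (2 : ℝ) ^ (s + 1) * ((1 + y) / 2) = 2 ^ s + 2 ^ s * y by ring]
  push_cast
  exact and_congr_left' ⟨fun ⟨h1, h2⟩ => ⟨by linarith, by linarith⟩,
    fun ⟨h1, h2⟩ => ⟨by linarith, by linarith⟩⟩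

lemma foldLeft_symm_image_dyadicCell {j b s : ℕ} (h : j + b + 1 = 2 ^ s) :
    foldLeft.symm '' dyadicCell b s = dyadicCell j (s + 1) := by
  rw [← foldLeft_image_dyadicCell h, Equiv.symm_image_image]

lemma foldRight_symm_image_dyadicCell {b s : ℕ} :
    foldRight.symm '' dyadicCell b s = dyadicCell (b + 2 ^ s) (s + 1) := by
  rw [← foldRight_image_dyadicCell, Equiv.symm_image_image]

lemma eqOn_T2_foldLeft : EqOn T2 (Prod.map foldLeft foldLeft.symm) (Prod.fst ⁻¹' Iio (1 / 2)) := by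
  intro p (hp : p.1 < 1 / 2)
  rw [T2, if_pos hp]
  rfl

lemma eqOn_T2_foldRight :
    EqOn T2 (Prod.map foldRight foldRight.symm) (Prod.fst ⁻¹' Ioi (1 / 2)) := by
  intro p (hp : 1 / 2 < p.1)
  rw [T2, if_neg (lt_asymm hp), if_neg hp.ne']
  rfl

theorem exists_T2_image_dyadicCell_prod {j b s t : ℕ} (hj : j < 2 ^ (s + 1)) (hb : b < 2 ^ t) :
    ∃ j' < 2 ^ s, ∃ b' < 2 ^ (t + 1),
      T2 '' (dyadicCell j (s + 1) ×ˢ dyadicCell b t) =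
        dyadicCell j' s ×ˢ dyadicCell b' (t + 1) := by
  rw [pow_succ] at hj
  rw [pow_succ]
  rcases lt_or_ge j (2 ^ s) with hlt | hge
  · have hEq := eqOn_T2_foldLeft.mono (s₁ := dyadicCell j (s + 1) ×ˢ dyadicCell b t)
      fun p hp => dyadicCell_succ_subset_Iio hlt hp.1
    refine ⟨2 ^ s - 1 - j, by omega, 2 ^ t - 1 - b, by omega, ?_⟩
    rw [hEq.image_eq, prodMap_image_prod, foldLeft_image_dyadicCell (b := 2 ^ s - 1 - j) (by omega),
      foldLeft_symm_image_dyadicCell (j := 2 ^ t - 1 - b) (by omega)]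
  · have hEq := eqOn_T2_foldRight.mono (s₁ := dyadicCell j (s + 1) ×ˢ dyadicCell b t)
      fun p hp => dyadicCell_succ_subset_Ioi hge hp.1
    obtain ⟨j', rfl⟩ : ∃ j', j = j' + 2 ^ s := ⟨j - 2 ^ s, by omega⟩
    refine ⟨j', by omega, b + 2 ^ t, by omega, ?_⟩
    rw [hEq.image_eq, prodMap_image_prod, foldRight_image_dyadicCell,
      foldRight_symm_image_dyadicCell]

theorem Tapply_image_pi {d : ℕ} {i L : Fin d} (hiL : i ≠ L) {S : Fin d → Set ℝ} {A B : Set ℝ}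
    (h : T2 '' (S i ×ˢ S L) = A ×ˢ B) :
    Tapply d i L '' {x | ∀ m, x m ∈ S m} = {y | ∀ m, y m ∈ update (update S i A) L B m} := by
  ext y
  constructor
  · rintro ⟨x, hx, rfl⟩ m
    have hAB : T2 (x i, x L) ∈ A ×ˢ B := h ▸ mem_image_of_mem T2 ⟨hx i, hx L⟩
    rcases eq_or_ne m i with rfl | hmi
    · simpa [Tapply, hiL] using hAB.1
    rcases eq_or_ne m L with rfl | hmL
    · simpa [Tapply, hmi] using hAB.2
    · simpa [Tapply, hmi, hmL] using hx m
  · intro hy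
    obtain ⟨⟨p, q⟩, ⟨hp, hq⟩, hpq⟩ : (y i, y L) ∈ T2 '' (S i ×ˢ S L) := by
      rw [h]
      exact ⟨by simpa [hiL] using hy i, by simpa using hy L⟩
    refine ⟨WithLp.toLp 2 (update (update y.ofLp i p) L q), fun m => ?_, ?_⟩
    · rcases eq_or_ne m i with rfl | hmi
      · simpa [hiL] using hp
      rcases eq_or_ne m L with rfl | hmL
      · simpa using hq
      · simpa [hmi, hmL] using hy m
    · ext m
      rcases eq_or_ne m i with rfl | hmi
      · simp [Tapply, hiL, hpq]
      rcases eq_or_ne m L with rfl | hmL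
      · simp [Tapply, hmi, hiL, hpq]
      · simp [Tapply, hmi, hmL]

def dyadicBox {d : ℕ} (j s : Fin d → ℕ) : Set (EuclideanSpace ℝ (Fin d)) :=
  {x | ∀ m, x m ∈ dyadicCell (j m) (s m)}

def IsDyadicBox {d : ℕ} (s : Fin d → ℕ) (A : Set (EuclideanSpace ℝ (Fin d))) : Prop :=
  ∃ j : Fin d → ℕ, (∀ m, j m < 2 ^ s m) ∧ A = dyadicBox j s

theorem IsDyadicBox.image_Tapply {d : ℕ} {i L : Fin d} (hiL : i ≠ L) {s : Fin d → ℕ}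
    {A : Set (EuclideanSpace ℝ (Fin d))} (hA : IsDyadicBox s A) (hs : s i ≠ 0) :
    IsDyadicBox (update (update s i (s i - 1)) L (s L + 1)) (Tapply d i L '' A) := by
  obtain ⟨j, hj, rfl⟩ := hA
  obtain ⟨t, ht⟩ : ∃ t, s i = t + 1 := Nat.exists_eq_succ_of_ne_zero hs
  obtain ⟨ji, hji, jL, hjL, hT⟩ := exists_T2_image_dyadicCell_prod (ht ▸ hj i) (hj L)
  refine ⟨update (update j i ji) L jL, fun m => ?_, ?_⟩
  · rcases eq_or_ne m L with rfl | hmL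
    · simpa using hjL
    rcases eq_or_ne m i with rfl | hmi
    · simpa [hmL, ht] using hji
    · simpa [hmL, hmi] using hj m
  · rw [← ht] at hT
    rw [dyadicBox, Tapply_image_pi hiL hT, dyadicBox]
    congr! 3 with x m
    rcases eq_or_ne m L with rfl | hmL
    · simp
    rcases eq_or_ne m i with rfl | hmi
    · simp [hmL, ht]
    · simp [hmL, hmi]

def TdStep (d : ℕ) (i : Fin d) (y : EuclideanSpace ℝ (Fin d)) : EuclideanSpace ℝ (Fin d) :=
  if hi : i.val < d - 1 then Tapply d i ⟨d - 1, by omega⟩ y else y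

lemma Td_eq_foldl_TdStep (d : ℕ) :
    Td d = fun x => (List.finRange d).foldl (fun y i => TdStep d i y) x := rfl

section Levels

variable {n : ℕ}

lemma TdStep_of_ne_last {i : Fin (n + 1)} (hi : i ≠ Fin.last n) :
    TdStep (n + 1) i = Tapply (n + 1) i (Fin.last n) :=
  funext fun _ => dif_pos (by simpa [Fin.lt_def] using Fin.lt_last_iff_ne_last.2 hi)

lemma TdStep_last : TdStep (n + 1) (Fin.last n) = id :=
  funext fun _ => dif_neg (by simp)

def levels (v h : ℕ) : Fin (n + 1) → ℕ := fun m => if m = Fin.last n then h else v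

-- The depths after `T_{d,i}` has been applied for exactly the `i ∈ P`.
def stageLevels (v h : ℕ) (P : Finset (Fin (n + 1))) : Fin (n + 1) → ℕ := fun m =>
  if m = Fin.last n then h + P.card else if m ∈ P then v else v + 1

lemma stageLevels_insert {v h : ℕ} {P : Finset (Fin (n + 1))} {i : Fin (n + 1)}
    (hi : i ≠ Fin.last n) (hiP : i ∉ P) :
    stageLevels v h (insert i P) = update (update (stageLevels v h P) i (stageLevels v h P i - 1))
      (Fin.last n) (stageLevels v h P (Fin.last n) + 1) := by
  funext m
  rcases eq_or_ne m (Fin.last n) with rfl | hm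
  · simp [stageLevels, Finset.card_insert_of_notMem hiP, add_assoc]
  rcases eq_or_ne m i with rfl | hmi
  · simp [stageLevels, hm, hiP]
  · simp [stageLevels, hm, hmi]

theorem IsDyadicBox.image_foldl_TdStep {v h : ℕ} :
    ∀ (l : List (Fin (n + 1))) (P : Finset (Fin (n + 1)))
      {A : Set (EuclideanSpace ℝ (Fin (n + 1)))},
      l.Nodup → (∀ i ∈ l, i ∉ P) → IsDyadicBox (stageLevels v h P) A →
      IsDyadicBox (stageLevels v h (P ∪ l.toFinset.erase (Fin.last n)))
        ((fun x => l.foldl (fun y i => TdStep (n + 1) i y) x) '' A)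
  | [], P, A, _, _, hA => by simpa using hA
  | i :: l, P, A, hnd, hP, hA => by
    rw [List.nodup_cons] at hnd
    have hcons : (fun x => (i :: l).foldl (fun y i => TdStep (n + 1) i y) x) '' A =
        (fun x => l.foldl (fun y i => TdStep (n + 1) i y) x) '' (TdStep (n + 1) i '' A) :=
      (image_image (fun x => l.foldl (fun y i => TdStep (n + 1) i y) x) _ _).symm
    rw [hcons, List.toFinset_cons]
    rcases eq_or_ne i (Fin.last n) with rfl | hi
    · rw [TdStep_last, image_id, Finset.erase_insert_eq_erase]
      exact image_foldl_TdStep l P hnd.2 (fun i' hi' => hP i' (List.mem_cons_of_mem _ hi')) hA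
    · rw [Finset.erase_insert_of_ne hi, Finset.union_insert, ← Finset.insert_union]
      have hiP : i ∉ P := hP i List.mem_cons_self
      refine image_foldl_TdStep l (insert i P) hnd.2 (fun i' hi' => ?_) ?_
      · rw [Finset.mem_insert, not_or]
        exact ⟨fun h => hnd.1 (h ▸ hi'), hP i' (List.mem_cons_of_mem _ hi')⟩
      · rw [TdStep_of_ne_last hi, stageLevels_insert hi hiP]
        exact hA.image_Tapply hi (by simp [stageLevels, hi, hiP])

theorem IsDyadicBox.image_Td {v h : ℕ} {A : Set (EuclideanSpace ℝ (Fin (n + 1)))}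
    (hA : IsDyadicBox (levels (v + 1) h) A) : IsDyadicBox (levels v (h + n)) (Td (n + 1) '' A) := by
  have hstart : stageLevels (n := n) v h ∅ = levels (v + 1) h := by
    funext m
    simp [stageLevels, levels]
  have hend : stageLevels v h (∅ ∪ (List.finRange (n + 1)).toFinset.erase (Fin.last n)) =
      levels v (h + n) := by
    funext m
    by_cases hm : m = Fin.last n <;> simp [stageLevels, levels, Finset.card_erase_of_mem, hm]
  rw [← hend, Td_eq_foldl_TdStep]
  exact IsDyadicBox.image_foldl_TdStep _ ∅ (List.nodup_finRange _) (by simp) (hstart ▸ hA)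

theorem IsDyadicBox.image_iterate_Td {v : ℕ} :
    ∀ (l h : ℕ) {A : Set (EuclideanSpace ℝ (Fin (n + 1)))}, IsDyadicBox (levels (v + l) h) A →
      IsDyadicBox (levels v (h + n * l)) ((Td (n + 1))^[l] '' A)
  | 0, h, A, hA => by simpa using hA
  | l + 1, h, A, hA => by
    rw [iterate_succ, image_comp, show h + n * (l + 1) = h + n + n * l by ring]
    exact image_iterate_Td l (h + n) hA.image_Td

lemma mem_Qd' {d : ℕ} {x : EuclideanSpace ℝ (Fin d)} :
    x ∈ Qd' d ↔ ∀ i, x i ∈ Ioo 0 1 ∧ x i ∉ dyadics := by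
  simp only [Qd', Qd, Set.mem_sdiff, mem_ofPred_eq, not_exists, mem_dyadics, ← forall_and]

lemma lastCoord_succ (x : EuclideanSpace ℝ (Fin (n + 1))) : lastCoord (n + 1) x = x (Fin.last n) :=
  dif_pos n.succ_pos

lemma update_last_lt_two_pow_levels {a h v : ℕ} {b : Fin (n + 1) → ℕ} (ha : a < 2 ^ h)
    (hb : ∀ i : Fin (n + 1), i.val < n → b i < 2 ^ v) (m : Fin (n + 1)) :
    update b (Fin.last n) a m < 2 ^ levels v h m := by
  rcases eq_or_ne m (Fin.last n) with rfl | hm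
  · simpa [levels] using ha
  · simpa [levels, hm] using hb m (Fin.lt_last_iff_ne_last.2 hm)

theorem Hslab_inter_VstripD {a h v : ℕ} {b : Fin (n + 1) → ℕ} (ha : a < 2 ^ h)
    (hb : ∀ i : Fin (n + 1), i.val < n → b i < 2 ^ v) :
    Hslab (n + 1) a h ∩ VstripD (n + 1) b v = dyadicBox (update b (Fin.last n) a) (levels v h) := by
  ext x
  simp only [Hslab, VstripD, dyadicBox, dyadicCell, mem_inter_iff, mem_ofPred_eq, lastCoord_succ,
    mem_Qd', Set.mem_sdiff, SetLike.mem_coe, Nat.add_sub_cancel]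
  constructor
  · rintro ⟨⟨hlast, hQ⟩, hV, -⟩ m
    rcases eq_or_ne m (Fin.last n) with rfl | hm
    · simpa [levels] using ⟨hlast, (hQ _).2⟩
    · simpa [levels, hm] using ⟨hV m (Fin.lt_last_iff_ne_last.2 hm), (hQ m).2⟩
  · intro hx
    have hQ : ∀ m, x m ∈ Ioo 0 1 ∧ x m ∉ dyadics := fun m =>
      ⟨dyadicCell_subset_Ioo (update_last_lt_two_pow_levels ha hb m) (hx m), (hx m).2⟩
    refine ⟨⟨by simpa [levels] using (hx (Fin.last n)).1, hQ⟩, fun i hi => ?_, hQ⟩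
    simpa [levels, (Fin.lt_last_iff_ne_last.1 hi)] using (hx i).1

theorem isDyadicBox_levels_iff {v h : ℕ} {A : Set (EuclideanSpace ℝ (Fin (n + 1)))} :
    IsDyadicBox (levels v h) A ↔ ∃ a < 2 ^ h, ∃ b : Fin (n + 1) → ℕ,
      (∀ i : Fin (n + 1), i.val < n → b i < 2 ^ v) ∧
        A = Hslab (n + 1) a h ∩ VstripD (n + 1) b v := by
  constructor
  · rintro ⟨J, hJ, rfl⟩
    have hb : ∀ i : Fin (n + 1), i.val < n → J i < 2 ^ v := fun i hi => by
      simpa [levels, Fin.lt_last_iff_ne_last.1 hi] using hJ i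
    refine ⟨J (Fin.last n), by simpa [levels] using hJ (Fin.last n), J, hb, ?_⟩
    rw [Hslab_inter_VstripD (by simpa [levels] using hJ (Fin.last n)) hb, update_eq_self]
  · rintro ⟨a, ha, b, hb, rfl⟩
    exact ⟨_, update_last_lt_two_pow_levels ha hb, Hslab_inter_VstripD ha hb⟩

end Levels

theorem image_of_dyadic_box (d : ℕ) (hd : 2 ≤ d) (k k' l : ℕ) (hl : l ≤ k')
    (jd : ℕ) (hjd : jd < 2 ^ k) (j : Fin d → ℕ) (hj : ∀ i : Fin d, i.val < d - 1 → j i < 2 ^ k') :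
    ∃ a : ℕ, a < 2 ^ (k + (d - 1) * l) ∧
      ∃ b : Fin d → ℕ, (∀ i : Fin d, i.val < d - 1 → b i < 2 ^ (k' - l)) ∧
        (Td d)^[l] '' (Hslab d jd k ∩ VstripD d j k')
          = Hslab d a (k + (d - 1) * l) ∩ VstripD d b (k' - l) := by
  obtain ⟨n, rfl⟩ : ∃ n, d = n + 1 := ⟨d - 1, by omega⟩
  rw [Nat.add_sub_cancel] at hj ⊢
  have hbox : IsDyadicBox (levels (k' - l + l) k) (Hslab (n + 1) jd k ∩ VstripD (n + 1) j k') := by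
    rw [Nat.sub_add_cancel hl]
    exact isDyadicBox_levels_iff.2 ⟨jd, hjd, j, hj, rfl⟩
  exact isDyadicBox_levels_iff.1 (hbox.image_iterate_Td l k)

end
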